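/- arXiv:1001.4602 — 8 statements merged into one kernel-verified Lean document; each statement's English description precedes it below -/
import Mathlib

section
/- Let K be a field and A a commutative K-algebra having an element t such that (1, t, t^2, …, t^{n−1}) is a K-basis of A. Let r, s, u be integers with 1 ≤ r ≤ s, u ≥ 1 and n ≥ su + r. Let X ⊆ A* be the dual annihilator of the K-span of {t^k : 0 ≤ k ≤ n−r−1}. If φ_0, …, φ_{u−1} ∈ X satisfy Σ_{i=0}^{u−1} φ_i ∘ m_{t^{is}} = 0 in A* (where m_a : A → A denotes multiplication by a), then φ_i = 0 for every i. Consequently, setting U = span_K{t^{is} : 0 ≤ i < u}, the subspace U·X of A* has dimension u·r. -/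
/-!
If `φ_j` is the last nonzero term of a relation `∑ φ_i ∘ m_{t^{is}} = 0`, evaluate the relation at
`t^{l - js}` for `n - r ≤ l < n`: the terms `i > j` vanish by choice of `j`, the terms `i < j`
because `is + l - js ≤ l - s < n - r` and `φ_i` kills `t^k` for `k < n - r`. So `φ_j` kills every
`t^l`, i.e. `φ_j = 0`. Hence `(φ_i) ↦ ∑ φ_i ∘ m_{t^{is}}` is injective on `X^u`; its image is
`U·X`, so `dim U·X = u · dim X = u r`.
-/

open Module Submodule

theorem Set.setOf_exists_lt_eq_range_fin {α : Type*} (f : ℕ → α) (m : ℕ) :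
    {x | ∃ k < m, x = f k} = Set.range fun k : Fin m => f k := by
  ext x
  constructor
  · rintro ⟨k, hk, rfl⟩
    exact ⟨⟨k, hk⟩, rfl⟩
  · rintro ⟨k, rfl⟩
    exact ⟨k, k.isLt, rfl⟩

theorem LinearMap.mulRight_eq_mulLeft {R A : Type*} [CommSemiring R] [CommSemiring A]
    [Algebra R A] (a : A) : mulRight R a = mulLeft R a :=
  ext fun x => mul_comm x a

section Bilinear

variable {R M N P ι : Type*} [Fintype ι]

theorem Submodule.map₂_span_range_eq_range_sum [CommSemiring R] [AddCommMonoid M]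
    [AddCommMonoid N] [AddCommMonoid P] [Module R M] [Module R N] [Module R P]
    (B : M →ₗ[R] N →ₗ[R] P) (p : Submodule R M) (v : ι → N) :
    map₂ B p (span R (Set.range v)) =
      LinearMap.range (∑ i, B.flip (v i) ∘ₗ p.subtype ∘ₗ LinearMap.proj i) := by
  classical
  apply le_antisymm
  · refine map₂_le.2 fun m hm w hw => ?_
    suffices span R (Set.range v) ≤ (LinearMap.range _).comap (B m) from this hw
    refine span_le.2 ?_
    rintro _ ⟨i, rfl⟩
    exact ⟨Pi.single i ⟨m, hm⟩, by simp [Pi.single_apply, apply_ite]⟩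
  · rintro _ ⟨x, rfl⟩
    simpa using sum_mem fun i _ => apply_mem_map₂ B (x i).2 (subset_span (Set.mem_range_self i))

theorem Submodule.span_setOf_exists_eq_map₂ [CommSemiring R] [AddCommMonoid M]
    [AddCommMonoid N] [AddCommMonoid P] [Module R M] [Module R N] [Module R P]
    (B : M →ₗ[R] N →ₗ[R] P) (p : Submodule R M) (q : Submodule R N) :
    span R {z | ∃ x ∈ p, ∃ y ∈ q, z = B x y} = map₂ B p q := by
  rw [map₂_eq_span_image2]
  congr 1
  ext z
  constructor <;> rintro ⟨x, hx, y, hy, h⟩ <;> exact ⟨x, hx, y, hy, h.symm⟩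

theorem Submodule.finrank_map₂_span_range [Field R] [AddCommGroup M] [AddCommGroup N]
    [AddCommGroup P] [Module R M] [Module R N] [Module R P]
    (B : M →ₗ[R] N →ₗ[R] P) (p : Submodule R M) [FiniteDimensional R p] (v : ι → N)
    (hB : ∀ x : ι → M, (∀ i, x i ∈ p) → ∑ i, B (x i) (v i) = 0 → ∀ i, x i = 0) :
    finrank R (map₂ B p (span R (Set.range v))) = Fintype.card ι * finrank R p := by
  have hinj : LinearMap.ker (∑ i, B.flip (v i) ∘ₗ p.subtype ∘ₗ LinearMap.proj i) = ⊥ :=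
    LinearMap.ker_eq_bot'.2 fun x hx => funext fun i => Subtype.ext <|
      hB (fun i => x i) (fun i => (x i).2) (by simpa using hx) i
  rw [map₂_span_range_eq_range_sum, LinearMap.finrank_range_of_inj (LinearMap.ker_eq_bot.1 hinj),
    finrank_pi_fintype]
  simp

end Bilinear

section PowerBasis

variable {K A : Type*} [CommSemiring K] [Semiring A] [Algebra K A] {n : ℕ} (b : Basis (Fin n) K A)
  {t : A} (hb : ∀ i : Fin n, b i = t ^ (i : ℕ))
include hb

theorem eq_zero_of_forall_pow_eq_zero {M : Type*} [AddCommMonoid M] [Module K M]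
    (f : A →ₗ[K] M) (h : ∀ l < n, f (t ^ l) = 0) : f = 0 :=
  b.ext fun i => by simpa [hb] using h i i.isLt

theorem finrank_span_pow_lt [Nontrivial K] [StrongRankCondition K] {m : ℕ} (hm : m ≤ n) :
    finrank K (span K (Set.range fun k : Fin m => t ^ (k : ℕ))) = m := by
  have hli : LinearIndependent K fun k : Fin m => t ^ (k : ℕ) := by
    simpa [Function.comp_def, hb] using b.linearIndependent.comp _ (Fin.castLE_injective hm)
  simpa using finrank_span_eq_card hli

theorem eq_zero_of_sum_comp_mulLeft_pow_eq_zero {m s u : ℕ} (hum : u * s ≤ m) (hnm : n ≤ m + s)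
    {φ : Fin u → Dual K A} (hφ : ∀ i, ∀ k < m, φ i (t ^ k) = 0)
    (hsum : ∑ i : Fin u, φ i ∘ₗ LinearMap.mulLeft K (t ^ ((i : ℕ) * s)) = 0) (j : Fin u) :
    φ j = 0 := by
  induction j using WellFoundedGT.induction with
  | _ j ih =>
  refine eq_zero_of_forall_pow_eq_zero b hb _ fun l hl => ?_
  rcases lt_or_ge l m with hlm | hml
  · exact hφ j l hlm
  have hj : (j : ℕ) * s + s ≤ u * s := by
    simpa [add_mul] using Nat.mul_le_mul_right s j.isLt
  have h := LinearMap.congr_fun hsum (t ^ (l - j * s))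
  simp only [LinearMap.sum_apply, LinearMap.comp_apply, LinearMap.mulLeft_apply,
    LinearMap.zero_apply, ← pow_add] at h
  rwa [Finset.sum_eq_single j, Nat.add_sub_cancel' (by omega)] at h
  · intro i _ hij
    rcases lt_or_gt_of_ne hij with hlt | hgt
    · have hi : (i : ℕ) * s + s ≤ j * s := by
        simpa [add_mul] using Nat.mul_le_mul_right s (Fin.lt_def.1 hlt)
      exact hφ i _ (by omega)
    · rw [ih i hgt, LinearMap.zero_apply]
  · simp

end PowerBasis

theorem finrank_dualAnnihilator_span_pow_lt {K A : Type*} [Field K] [Ring A] [Algebra K A]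
    {n : ℕ} (b : Basis (Fin n) K A) {t : A} (hb : ∀ i : Fin n, b i = t ^ (i : ℕ))
    {m : ℕ} (hm : m ≤ n) :
    finrank K (span K (Set.range fun k : Fin m => t ^ (k : ℕ))).dualAnnihilator = n - m := by
  have : Module.Finite K A := .of_basis b
  have := Subspace.finrank_add_finrank_dualAnnihilator_eq
    (span K (Set.range fun k : Fin m => t ^ (k : ℕ)))
  rw [finrank_span_pow_lt b hb hm, finrank_eq_card_basis b, Fintype.card_fin] at this
  omega

def dualMulRight (K A : Type*) [CommSemiring K] [Semiring A] [Algebra K A] :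
    Dual K A →ₗ[K] A →ₗ[K] Dual K A :=
  (LinearMap.llcomp K A A K).compl₂ (LinearMap.mul K A).flip

@[simp]
theorem dualMulRight_apply {K A : Type*} [CommSemiring K] [Semiring A] [Algebra K A]
    (φ : Dual K A) (v : A) : dualMulRight K A φ v = φ ∘ₗ LinearMap.mulRight K v :=
  rfl

/-- In a commutative `K`-algebra `A` with power basis `(1, t, …, t^{n-1})`,
with `1 ≤ r ≤ s`, `u ≥ 1`, `n ≥ su + r`, and `X ⊆ A*` the dual annihilator of
`span {t^k : k ≤ n - r - 1}`: any relation `∑ φᵢ ∘ m_{t^{i s}} = 0` with `φᵢ ∈ X` forces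
all `φᵢ = 0`; consequently, for `U = span {t^{i s} : i < u}`, the subspace
`U·X = span {a ↦ φ(a·v) : φ ∈ X, v ∈ U}` of `A*` has dimension `u * r`. -/
theorem stmt_0 (K : Type*) [Field K] (A : Type*) [CommRing A] [Algebra K A]
    (n : ℕ) (t : A) (b : Module.Basis (Fin n) K A) (hb : ∀ i : Fin n, b i = t ^ (i : ℕ))
    (r s u : ℕ) (hr : 1 ≤ r) (hrs : r ≤ s) (hu : 1 ≤ u) (hn : s * u + r ≤ n)
    (X : Submodule K (Module.Dual K A))
    (hX : X = (Submodule.span K {x : A | ∃ k ≤ n - r - 1, x = t ^ k}).dualAnnihilator) :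
    (∀ φ : Fin u → Module.Dual K A, (∀ i, φ i ∈ X) →
      (∑ i : Fin u, (φ i) ∘ₗ (LinearMap.mulLeft K (t ^ ((i : ℕ) * s)))) = 0 →
      ∀ i, φ i = 0) ∧
    (∀ U : Submodule K A, U = Submodule.span K {x : A | ∃ i < u, x = t ^ (i * s)} →
      Module.finrank K ↥(Submodule.span K {ψ : Module.Dual K A |
        ∃ φ ∈ X, ∃ v ∈ U, ψ = φ ∘ₗ (LinearMap.mulRight K v)}) = u * r) := by
  have : Module.Finite K A := .of_basis b
  have hsu : 1 ≤ s * u := Nat.mul_pos (by omega) hu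
  simp_rw [Nat.le_sub_one_iff_lt (by omega : 0 < n - r), Set.setOf_exists_lt_eq_range_fin] at hX
  have hXpow : ∀ φ ∈ X, ∀ k < n - r, φ (t ^ k) = 0 := fun φ hφ k hk => by
    rw [hX, mem_dualAnnihilator] at hφ
    exact hφ _ (subset_span ⟨⟨k, hk⟩, rfl⟩)
  have hrel : ∀ φ : Fin u → Dual K A, (∀ i, φ i ∈ X) →
      ∑ i : Fin u, φ i ∘ₗ LinearMap.mulLeft K (t ^ ((i : ℕ) * s)) = 0 → ∀ i, φ i = 0 :=
    fun φ hφ => eq_zero_of_sum_comp_mulLeft_pow_eq_zero b hb (m := n - r)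
      (by rw [mul_comm]; omega) (by omega) fun i => hXpow _ (hφ i)
  refine ⟨hrel, ?_⟩
  rintro U rfl
  have hUX := span_setOf_exists_eq_map₂ (dualMulRight K A) X
    (span K {x : A | ∃ i < u, x = t ^ (i * s)})
  simp only [dualMulRight_apply] at hUX
  rw [hUX, Set.setOf_exists_lt_eq_range_fin fun i => t ^ (i * s), finrank_map₂_span_range, hX,
    finrank_dualAnnihilator_span_pow_lt b hb (Nat.sub_le n r), Fintype.card_fin,
    Nat.sub_sub_self (by omega)]
  intro φ hφ hsum
  exact hrel φ hφ (by simpa [LinearMap.mulRight_eq_mulLeft] using hsum)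
end

section
/- Let K be a field and A a commutative K-algebra of dimension n having an element t such that (1, t, …, t^{n−1}) is a K-basis of A. Then for all integers r, s, u ≥ 1 with n ≥ ru + s and n ≥ su + r, there exist K-subspaces U ⊆ A with dim U = u, Y ⊆ A with dim Y = s, and X ⊆ A* with dim X = r, such that φ(y·u') = 0 for all φ ∈ X, y ∈ Y, u' ∈ U, and such that dim(Y·U) = su and dim(U·X) = ru (the largest possible values). -/
/-!
Let `c_m` be the `m`-th coordinate for the basis `1, t, …, t^(n-1)`. The pairing
`(x, a) ↦ c_m (x * a)` is unitriangular on powers of `t`: `c_m (t^(m-i) * t^j)` vanishes for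
`j < i` and is `1` for `j = i`. Hence the functionals `c_m (· * t^k)`, `k ≤ m`, are linearly
independent, just like the powers `t^e`, `e < n`.

With `α = max r s` take `U = ⟨t^(iα) | i < u⟩`, `Y = ⟨t^j | j < s⟩` and
`X = ⟨c_m (· * t^k) | k < r⟩` for `m = r + s - 1 + (u - 1)α < n`. The products and composites
are again monomials, with exponents `j + iα` and `k + iα`; these are pairwise distinct since
`j, k < α` are the base-`α` remainders, which gives the dimensions `su` and `ru`. Orthogonality
holds because `j + iα + k < m`.
-/

open Module Submodule
open scoped Pointwise

section Triangular

open Set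

variable {K M : Type*} [Field K] [AddCommGroup M] [Module K M]

theorem linearIndepOn_Iio_of_triangular {v : ℕ → M} (f : ℕ → Dual K M) {N : ℕ}
    (h_lt : ∀ i < N, ∀ j < i, f i (v j) = 0) (h_diag : ∀ i < N, f i (v i) ≠ 0) :
    LinearIndepOn K v (Iio N) := by
  induction N with
  | zero => simp
  | succ N ih =>
    have h_span : span K (v '' Iio N) ≤ LinearMap.ker (f N) := by
      rw [span_le]
      rintro _ ⟨j, hj, rfl⟩
      exact h_lt N (by omega) j hj
    rw [← Order.succ_eq_add_one, Order.Iio_succ, ← Iio_insert, linearIndepOn_insert self_notMem_Iio]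
    exact ⟨ih (fun i hi ↦ h_lt i (by omega)) (fun i hi ↦ h_diag i (by omega)),
      fun h ↦ h_diag N (by omega) (h_span h)⟩

theorem LinearIndepOn.finrank_span_image_finset {ι : Type*} {v : ι → M} {E : Finset ι}
    (h : LinearIndepOn K v (E : Set ι)) : finrank K (span K (v '' E)) = E.card := by
  rw [image_eq_range, finrank_span_eq_card h]
  simp

end Triangular

section MulRightDual

open Set

variable (K A : Type*) [CommSemiring K] [Semiring A] [Algebra K A]

def mulRightDual : Dual K A →ₗ[K] A →ₗ[K] Dual K A :=
  (LinearMap.llcomp K A A K).compl₂ (LinearMap.mul K A).flip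

variable {K A}

@[simp]
theorem mulRightDual_apply_apply (φ : Dual K A) (a x : A) : mulRightDual K A φ a x = φ (x * a) :=
  rfl

theorem span_setOf_comp_mulRight (X : Submodule K (Dual K A)) (U : Submodule K A) :
    span K {ψ : Dual K A | ∃ φ ∈ X, ∃ v ∈ U, ψ = φ ∘ₗ LinearMap.mulRight K v} =
      map₂ (mulRightDual K A) X U := by
  rw [map₂_eq_span_image2]
  congr 1
  ext ψ
  simp only [mem_ofPred_eq, mem_image2, SetLike.mem_coe, eq_comm]
  rfl

end MulRightDual

section PowImage

open Set

theorem mulRightDual_mulRightDual {K A : Type*} [CommSemiring K] [CommSemiring A] [Algebra K A]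
    (φ : Dual K A) (a a' : A) :
    mulRightDual K A (mulRightDual K A φ a) a' = mulRightDual K A φ (a * a') := by
  ext x
  simp only [mulRightDual_apply_apply, mul_assoc, mul_comm a']

theorem image_pow_mul_image_pow {M : Type*} [Monoid M] (t : M) (S T : Set ℕ) :
    (t ^ ·) '' S * (t ^ ·) '' T = (t ^ ·) '' (S + T) := by
  simp only [← image2_mul, ← image2_add, image_image2, image2_image_left, image2_image_right,
    pow_add]

theorem image2_mulRightDual_image_pow {K A : Type*} [CommSemiring K] [CommSemiring A] [Algebra K A]
    (φ : Dual K A) (t : A) (R T : Set ℕ) :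
    image2 (fun ψ a ↦ mulRightDual K A ψ a) ((fun k ↦ mulRightDual K A φ (t ^ k)) '' R)
      ((t ^ ·) '' T) = (fun e ↦ mulRightDual K A φ (t ^ e)) '' (R + T) := by
  simp only [← image2_add, image_image2, image2_image_left, image2_image_right,
    mulRightDual_mulRightDual, pow_add]

end PowImage

section Monogenic

open Set

variable {K A : Type*} [Field K] [Ring A] [Algebra K A] {n : ℕ} {t : A}
  (b : Basis (Fin n) K A) (hb : ∀ i, b i = t ^ (i : ℕ))
include hb

theorem linearIndepOn_pow : LinearIndepOn K (t ^ ·) (Iio n) := by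
  rw [← Fin.range_val, ← image_univ]
  refine LinearIndepOn.image_of_comp _ _ ?_
  rw [show ((t ^ ·) ∘ Fin.val : Fin n → A) = b from funext fun i ↦ (hb i).symm]
  exact b.linearIndependent.linearIndepOn_univ

theorem coord_pow (i : Fin n) {j : ℕ} (hj : j < n) :
    b.coord i (t ^ j) = if j = i then 1 else 0 := by
  rw [← hb ⟨j, hj⟩, Basis.coord_apply, b.repr_self_apply]
  simp [Fin.ext_iff]

theorem linearIndepOn_mulRightDual_coord_pow (m : Fin n) :
    LinearIndepOn K (fun e ↦ mulRightDual K A (b.coord m) (t ^ e)) (Iio ((m : ℕ) + 1)) := by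
  refine linearIndepOn_Iio_of_triangular (fun i ↦ Dual.eval K A (t ^ ((m : ℕ) - i))) ?_ ?_
  · intro i hi j hj
    simp only [Dual.eval_apply, mulRightDual_apply_apply, ← pow_add]
    rw [coord_pow b hb m (by omega), if_neg (by omega)]
  · intro i hi
    simp only [Dual.eval_apply, mulRightDual_apply_apply, ← pow_add]
    rw [coord_pow b hb m (by omega), if_pos (by omega)]
    exact one_ne_zero

theorem finrank_span_image_pow {E : Finset ℕ} (hE : ∀ e ∈ E, e < n) :
    finrank K (span K ((t ^ ·) '' (E : Set ℕ))) = E.card :=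
  ((linearIndepOn_pow b hb).mono hE).finrank_span_image_finset

theorem finrank_span_image_mulRightDual_coord_pow (m : Fin n) {E : Finset ℕ}
    (hE : ∀ e ∈ E, e ≤ m) :
    finrank K (span K ((fun e ↦ mulRightDual K A (b.coord m) (t ^ e)) '' (E : Set ℕ))) = E.card :=
  ((linearIndepOn_mulRightDual_coord_pow b hb m).mono
    fun e he ↦ Set.mem_Iio.2 (Nat.lt_succ_of_le (hE e he))).finrank_span_image_finset

theorem span_mulRightDual_coord_pow_le_dualAnnihilator (m : Fin n) {R E : Set ℕ}
    (h : ∀ k ∈ R, ∀ e ∈ E, e + k < m) :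
    span K ((fun k ↦ mulRightDual K A (b.coord m) (t ^ k)) '' R) ≤
      (span K ((t ^ ·) '' E)).dualAnnihilator := by
  rw [span_le]
  rintro _ ⟨k, hk, rfl⟩
  have h_ker : span K ((t ^ ·) '' E) ≤ LinearMap.ker (mulRightDual K A (b.coord m) (t ^ k)) := by
    rw [span_le]
    rintro _ ⟨e, he, rfl⟩
    have := h k hk e he
    simp only [SetLike.mem_coe, LinearMap.mem_ker, mulRightDual_apply_apply, ← pow_add]
    rw [coord_pow b hb m (by omega), if_neg (by omega)]
  exact (mem_dualAnnihilator _).2 fun w hw ↦ h_ker hw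

end Monogenic

theorem exists_monomial_subspaces {K A : Type*} [Field K] [CommRing A] [Algebra K A] {n : ℕ}
    {t : A} (b : Basis (Fin n) K A) (hb : ∀ i, b i = t ^ (i : ℕ)) (m : Fin n) {S R T : Finset ℕ}
    (hS : ∀ e ∈ S, e < n) (hT : ∀ e ∈ T, e < n) (hR : ∀ k ∈ R, k ≤ m)
    (hST : ∀ e ∈ S + T, e < n) (hRT : ∀ e ∈ R + T, e ≤ m)
    (h_orth : ∀ k ∈ R, ∀ e ∈ S + T, e + k < m) :
    ∃ (U Y : Submodule K A) (X : Submodule K (Dual K A)),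
      finrank K U = T.card ∧ finrank K Y = S.card ∧ finrank K X = R.card ∧
      (∀ φ ∈ X, ∀ y ∈ Y, ∀ v ∈ U, φ (y * v) = 0) ∧
      finrank K ↥(Y * U) = (S + T).card ∧
      finrank K (span K {ψ : Dual K A | ∃ φ ∈ X, ∃ v ∈ U, ψ = φ ∘ₗ LinearMap.mulRight K v}) =
        (R + T).card := by
  have hYU : span K ((t ^ ·) '' (S : Set ℕ)) * span K ((t ^ ·) '' (T : Set ℕ)) =
      span K ((t ^ ·) '' ↑(S + T)) := by
    rw [span_mul_span, image_pow_mul_image_pow, Finset.coe_add]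
  have hX := span_mulRightDual_coord_pow_le_dualAnnihilator b hb m (E := ↑(S + T)) h_orth
  refine ⟨_, _, _, finrank_span_image_pow b hb hT, finrank_span_image_pow b hb hS,
    finrank_span_image_mulRightDual_coord_pow b hb m hR, fun φ hφ y hy v hv ↦
      (mem_dualAnnihilator φ).1 ((hYU ▸ hX) hφ) _ (mul_mem_mul hy hv), ?_, ?_⟩
  · rw [hYU, finrank_span_image_pow b hb hST]
  · rw [span_setOf_comp_mulRight, map₂_span_span, image2_mulRightDual_image_pow, ← Finset.coe_add,
      finrank_span_image_mulRightDual_coord_pow b hb m hRT]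

namespace Finset

theorem card_add_image_mul {E : Finset ℕ} {α : ℕ} (hE : ∀ j ∈ E, j < α) (u : ℕ) :
    #(E + (range u).image (· * α)) = #E * u := by
  have h_eq : E + (range u).image (· * α) = (E ×ˢ range u).image (fun p ↦ p.1 + p.2 * α) := by
    ext e
    simp only [mem_add, mem_image, mem_range, mem_product, Prod.exists]
    constructor
    · rintro ⟨j, hj, _, ⟨i, hi, rfl⟩, rfl⟩
      exact ⟨j, i, ⟨hj, hi⟩, rfl⟩
    · rintro ⟨j, i, ⟨hj, hi⟩, rfl⟩
      exact ⟨j, hj, _, ⟨i, hi, rfl⟩, rfl⟩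
  rw [h_eq, card_image_of_injOn, card_product, card_range]
  rintro ⟨j, i⟩ hji ⟨j', i'⟩ hji' h
  simp only [coe_product, Set.mem_prod, mem_coe] at hji hji' h
  have hj : j = j' := by
    have := congrArg (· % α) h
    simpa [Nat.add_mul_mod_self_right, Nat.mod_eq_of_lt (hE j hji.1),
      Nat.mod_eq_of_lt (hE j' hji'.1)] using this
  subst hj
  have hα : α ≠ 0 := by have := hE j hji.1; omega
  simpa [hα] using h

theorem le_of_mem_image_mul {u α e : ℕ} (he : e ∈ (range u).image (· * α)) : e ≤ (u - 1) * α := by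
  obtain ⟨i, hi, rfl⟩ := mem_image.1 he
  exact Nat.mul_le_mul_right α (Nat.le_sub_one_of_lt (mem_range.1 hi))

theorem lt_of_mem_range_add_image_mul {a u α e : ℕ} (he : e ∈ range a + (range u).image (· * α)) :
    e < a + (u - 1) * α := by
  obtain ⟨j, hj, i, hi, rfl⟩ := mem_add.1 he
  have := le_of_mem_image_mul hi
  have := mem_range.1 hj
  omega

end Finset

/-- A monogenic commutative `K`-algebra `A` of dimension `n` (with power basis
`(1, t, …, t^{n-1})`) possesses good subspaces of every dimension: for all `r, s, u ≥ 1`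
with `n ≥ ru + s` and `n ≥ su + r`, there are subspaces `U ⊆ A`, `Y ⊆ A`, `X ⊆ A*` of
dimensions `u`, `s`, `r` with `φ(y·u') = 0` for all `φ ∈ X`, `y ∈ Y`, `u' ∈ U`, and with
`dim (Y·U) = su` and `dim (U·X) = ru`, the largest possible values. Here `Y·U` is the span
of the products `y·u'` and `U·X` is the span of the functionals `a ↦ φ(a·u')`. -/
theorem stmt_2 (K : Type*) [Field K] (A : Type*) [CommRing A] [Algebra K A]
    (n : ℕ) (t : A) (b : Module.Basis (Fin n) K A) (hb : ∀ i : Fin n, b i = t ^ (i : ℕ)) :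
    ∀ r s u : ℕ, 1 ≤ r → 1 ≤ s → 1 ≤ u → r * u + s ≤ n → s * u + r ≤ n →
    ∃ (U Y : Submodule K A) (X : Submodule K (Module.Dual K A)),
      Module.finrank K ↥U = u ∧ Module.finrank K ↥Y = s ∧ Module.finrank K ↥X = r ∧
      (∀ φ ∈ X, ∀ y ∈ Y, ∀ v ∈ U, φ (y * v) = 0) ∧
      Module.finrank K ↥(Y * U) = s * u ∧
      Module.finrank K ↥(Submodule.span K {ψ : Module.Dual K A |
        ∃ φ ∈ X, ∃ v ∈ U, ψ = φ ∘ₗ (LinearMap.mulRight K v)}) = r * u := by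
  intro r s u hr hs hu hru hsu
  set α := max r s
  have hn : r + s + (u - 1) * α ≤ n := by
    obtain ⟨u, rfl⟩ := Nat.exists_eq_add_of_le' hu
    rcases max_choice r s with h | h <;> simp only [α, h, Nat.add_sub_cancel] <;> nlinarith
  have hS : ∀ j ∈ Finset.range s, j < α := fun j hj ↦
    (Finset.mem_range.1 hj).trans_le (le_max_right r s)
  have hR : ∀ k ∈ Finset.range r, k < α := fun k hk ↦
    (Finset.mem_range.1 hk).trans_le (le_max_left r s)
  have hT (e) (he : e ∈ (Finset.range u).image (· * α)) := Finset.le_of_mem_image_mul he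
  have hST (e) (he : e ∈ Finset.range s + (Finset.range u).image (· * α)) :=
    Finset.lt_of_mem_range_add_image_mul he
  have hRT (e) (he : e ∈ Finset.range r + (Finset.range u).image (· * α)) :=
    Finset.lt_of_mem_range_add_image_mul he
  obtain ⟨U, Y, X, hU, hY, hX, h_orth, hYU, hUX⟩ :=
    exists_monomial_subspaces b hb ⟨r + s - 1 + (u - 1) * α, by omega⟩
      (fun j hj ↦ by have := hS j hj; omega) (fun e he ↦ by have := hT e he; omega)
      (fun k hk ↦ by have := hR k hk; dsimp only; omega) (fun e he ↦ by have := hST e he; omega)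
      (fun e he ↦ by have := hRT e he; dsimp only; omega)
      (fun k hk e he ↦ by have := Finset.mem_range.1 hk; have := hST e he; dsimp only; omega)
  refine ⟨U, Y, X, ?_, ?_, ?_, h_orth, ?_, ?_⟩
  · rw [hU, Finset.card_image_of_injective _ (mul_left_injective₀ (by omega)), Finset.card_range]
  · rw [hY, Finset.card_range]
  · rw [hX, Finset.card_range]
  · rw [hYU, Finset.card_add_image_mul hS, Finset.card_range]
  · rw [hUX, Finset.card_add_image_mul hR, Finset.card_range]
end

section
/- Let K ⊆ L be fields with L a finite extension of K of degree n, and suppose that every K-subalgebra of L equals K or L. Then for every K-subspace E of L with 0 < dim_K E < n, the set {a ∈ L : a·E ⊆ E} equals K (the image of K in L). -/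
/-- If `L/K` is a finite field extension of degree `n` whose only
`K`-subalgebras are `K` and `L`, then for every `K`-subspace `E ⊆ L` with
`0 < dim_K E < n`, the set `{a ∈ L : a·E ⊆ E}` is exactly the image of `K` in `L`. -/
theorem stmt_3 (K L : Type*) [Field K] [Field L] [Algebra K L] [FiniteDimensional K L]
    (hsub : ∀ S : Subalgebra K L, S = ⊥ ∨ S = ⊤)
    (E : Submodule K L) (h0 : 0 < Module.finrank K ↥E)
    (h1 : Module.finrank K ↥E < Module.finrank K L) :
    {a : L | ∀ e ∈ E, a * e ∈ E} = Set.range (algebraMap K L) := by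
  let S : Subalgebra K L :=
    { carrier := {a : L | ∀ e ∈ E, a * e ∈ E}
      mul_mem' := fun {a b} ha hb e he => by
        have := ha (b * e) (hb e he)
        rwa [← mul_assoc] at this
      add_mem' := fun {a b} ha hb e he => by
        have := E.add_mem (ha e he) (hb e he)
        rwa [← add_mul] at this
      algebraMap_mem' := fun k e he => by
        rw [Algebra.algebraMap_eq_smul_one, smul_mul_assoc, one_mul]
        exact E.smul_mem k he }
  rcases hsub S with h | h
  · have : (S : Set L) = Set.range (algebraMap K L) := by rw [h, Algebra.coe_bot]
    exact this
  · exfalso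
    -- every a ∈ L stabilizes E; pick nonzero e ∈ E
    obtain ⟨e, he, hne⟩ : ∃ e ∈ E, e ≠ 0 := by
      by_contra hc
      push_neg at hc
      have : E = ⊥ := by
        ext x; simp only [Submodule.mem_bot]
        exact ⟨fun hx => hc x hx, fun hx => hx ▸ E.zero_mem⟩
      rw [this] at h0
      simp at h0
    have hE : E = ⊤ := by
      ext x
      simp only [Submodule.mem_top, iff_true]
      have hx : x * e⁻¹ ∈ S := h ▸ Algebra.mem_top
      have := hx e he
      rwa [mul_assoc, inv_mul_cancel₀ hne, mul_one] at this
    rw [hE] at h1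
    simp at h1
end

section
/- Let K be a field, A a K-algebra, and E a K-subspace of A such that {a ∈ A : a·E ⊆ E} = K·1 (the image of K in A). Let R be a commutative K-algebra which is free as a K-module. Then in the R-algebra A ⊗_K R, the set {x ∈ A ⊗_K R : x·(E ⊗_K R) ⊆ E ⊗_K R} equals R·1, i.e., the image of R under the structural map R → A ⊗_K R (equivalently, the bottom R-subalgebra of A ⊗_K R). -/
/-!
Choose a `K`-basis `(bᵢ)` of `R`, so that every `x ∈ R ⊗[K] A` is uniquely `∑ bᵢ ⊗ xᵢ`.
Membership in `N.baseChange R` is read off coordinatewise, and the coordinates are right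
`A`-linear: the `i`-th coordinate of `x * (1 ⊗ e)` is `xᵢ * e`. Hence if `x` stabilizes
`E.baseChange R`, each `xᵢ` stabilizes `E`, so lies in `K·1`, and then
`x ∈ (K·1).baseChange R = R·1`.
-/

open TensorProduct

section Coordinates

variable {K R ι : Type*} [CommSemiring K] [Semiring R] [Algebra K R] [DecidableEq ι]
  (b : Module.Basis ι K R)

theorem Submodule.mem_baseChange_iff_forall_equivFinsuppOfBasisLeft_mem {M : Type*}
    [AddCommMonoid M] [Module K M] (N : Submodule K M) (x : R ⊗[K] M) :
    x ∈ N.baseChange R ↔ ∀ i, equivFinsuppOfBasisLeft b x i ∈ N := by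
  constructor
  · rintro ⟨z, rfl⟩ i
    induction z using TensorProduct.induction_on with
    | zero => simp
    | tmul r n =>
      rw [LinearMap.baseChange_tmul, equivFinsuppOfBasisLeft_apply_tmul_apply]
      exact N.smul_mem _ n.2
    | add u v hu hv =>
      rw [map_add, map_add, Finsupp.add_apply]
      exact N.add_mem hu hv
  · intro hx
    rw [← (equivFinsuppOfBasisLeft b).symm_apply_apply x, equivFinsuppOfBasisLeft_symm_apply]
    exact Submodule.finsuppSum_mem _ _ _ _ fun i _ ↦ tmul_mem_baseChange_of_mem _ (hx i)

theorem equivFinsuppOfBasisLeft_mul_one_tmul {A : Type*} [Semiring A] [Algebra K A]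
    (x : R ⊗[K] A) (a : A) (i : ι) :
    equivFinsuppOfBasisLeft b (x * (1 ⊗ₜ a)) i = equivFinsuppOfBasisLeft b x i * a := by
  induction x using TensorProduct.induction_on with
  | zero => simp
  | tmul r a' =>
    rw [Algebra.TensorProduct.tmul_mul_tmul, mul_one, equivFinsuppOfBasisLeft_apply_tmul_apply,
      equivFinsuppOfBasisLeft_apply_tmul_apply, smul_mul_assoc]
  | add u v hu hv =>
    rw [add_mul, map_add, map_add, Finsupp.add_apply, Finsupp.add_apply, hu, hv, add_mul]

theorem equivFinsuppOfBasisLeft_mul_mem_of_forall_mul_mem_baseChange {A : Type*} [Semiring A]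
    [Algebra K A] {E : Submodule K A} {x : R ⊗[K] A}
    (hx : ∀ y ∈ E.baseChange R, x * y ∈ E.baseChange R) (i : ι) :
    ∀ e ∈ E, equivFinsuppOfBasisLeft b x i * e ∈ E := fun e he ↦ by
  rw [← equivFinsuppOfBasisLeft_mul_one_tmul]
  exact (E.mem_baseChange_iff_forall_equivFinsuppOfBasisLeft_mem b _).1
    (hx _ (Submodule.tmul_mem_baseChange_of_mem 1 he)) i

end Coordinates

theorem Submodule.baseChange_one {K R A : Type*} [CommSemiring K] [CommSemiring R]
    [Algebra K R] [Semiring A] [Algebra K A] :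
    (1 : Submodule K A).baseChange R = 1 := by
  rw [Submodule.one_eq_span, Submodule.baseChange_span, Set.image_singleton,
    TensorProduct.mk_apply, ← Algebra.TensorProduct.one_def, ← Submodule.one_eq_span]

/-- Let `E` be a `K`-subspace of a `K`-algebra `A` such that
`{a ∈ A : a·E ⊆ E} = K·1`. For any commutative `K`-algebra `R` which is free as a
`K`-module, one has `{x ∈ R ⊗[K] A : x·(R ⊗[K] E) ⊆ R ⊗[K] E} = R·1`, the image of `R`
under the structural map of the `R`-algebra `R ⊗[K] A`. -/
theorem stmt_4 (K : Type*) [Field K] (A : Type*) [Ring A] [Algebra K A]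
    (E : Submodule K A)
    (hE : {a : A | ∀ e ∈ E, a * e ∈ E} = Set.range (algebraMap K A))
    (R : Type*) [CommRing R] [Algebra K R] [Module.Free K R] :
    {x : R ⊗[K] A | ∀ e ∈ E.baseChange R, x * e ∈ E.baseChange R} =
      Set.range (algebraMap R (R ⊗[K] A)) := by
  classical
  let b := Module.Free.chooseBasis K R
  ext x
  constructor
  · intro hx
    have hcoord : ∀ i, equivFinsuppOfBasisLeft b x i ∈ (1 : Submodule K A) := fun i ↦ by
      have hstab : equivFinsuppOfBasisLeft b x i ∈ {a : A | ∀ e ∈ E, a * e ∈ E} :=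
        equivFinsuppOfBasisLeft_mul_mem_of_forall_mul_mem_baseChange b hx i
      rw [hE] at hstab
      exact Submodule.mem_one.2 hstab
    have hx1 := ((1 : Submodule K A).mem_baseChange_iff_forall_equivFinsuppOfBasisLeft_mem b
      x).2 hcoord
    rwa [Submodule.baseChange_one, Submodule.mem_one] at hx1
  · rintro ⟨r, rfl⟩ e he
    rw [← Algebra.smul_def]
    exact (E.baseChange R).smul_mem r he
end

section
/- Let K be an infinite field and A a finite-dimensional commutative étale K-algebra (i.e., A is a finite product of finite separable field extensions of K; equivalently A is finite-dimensional and formally étale over K). Then there exists t ∈ A such that A is generated by t as a K-algebra, i.e., Algebra.adjoin K {t} = A. -/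
/-!
Fix an algebraic closure `F` of `K`. Since `A` is a product of finite separable extensions of `K`,
it has exactly `dim_K A` distinct `K`-algebra maps `A → F`. As `K` is infinite, the finitely many
proper subspaces `{x | φ x = ψ x}`, `φ ≠ ψ`, do not cover `A`, so some `t` takes pairwise distinct
values under these maps. Restriction to `K[t]` is then injective on them, and a finite-dimensional
algebra has at most as many maps to a domain as its dimension, so `dim_K K[t] ≥ dim_K A`.
-/

universe u

open Module

theorem exists_injective_algHom_apply {K A L : Type*} [Field K] [Infinite K] [Ring A]
    [Algebra K A] [Semiring L] [Algebra K L] [Finite (A →ₐ[K] L)] :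
    ∃ t : A, Function.Injective fun φ : A →ₐ[K] L ↦ φ t := by
  by_contra! h
  have hcover : ⋃ p : {p : (A →ₐ[K] L) × (A →ₐ[K] L) // p.1 ≠ p.2},
      (LinearMap.eqLocus p.1.1.toLinearMap p.1.2.toLinearMap : Set A) = Set.univ := by
    refine Set.eq_univ_of_forall fun t ↦ ?_
    obtain ⟨φ, ψ, hφψ, hne⟩ := Function.not_injective_iff.mp (h t)
    exact Set.mem_iUnion.mpr ⟨⟨(φ, ψ), hne⟩, hφψ⟩
  obtain ⟨⟨⟨φ, ψ⟩, hne⟩, htop⟩ := Subspace.exists_eq_top_of_iUnion_eq_univ hcover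
  exact hne (AlgHom.toLinearMap_injective (LinearMap.eqLocus_eq_top.mp htop))

theorem Algebra.adjoin_singleton_eq_top_of_injective_algHom_apply {K A L : Type*} [Field K]
    [Ring A] [Algebra K A] [FiniteDimensional K A] [CommRing L] [IsDomain L] [Algebra K L]
    {t : A} (ht : Function.Injective fun φ : A →ₐ[K] L ↦ φ t)
    (hcard : finrank K A ≤ Nat.card (A →ₐ[K] L)) :
    Algebra.adjoin K {t} = ⊤ := by
  have hres : Function.Injective fun φ : A →ₐ[K] L ↦ φ.comp (Algebra.adjoin K {t}).val :=
    fun φ ψ h ↦ ht (by simpa using AlgHom.congr_fun h ⟨t, Algebra.self_mem_adjoin_singleton K t⟩)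
  have hle : finrank K A ≤ finrank K (Algebra.adjoin K {t}) :=
    hcard.trans ((Nat.card_le_card_of_injective _ hres).trans (card_algHom_le_finrank K _ L))
  rw [← Algebra.toSubmodule_eq_top]
  exact Submodule.eq_top_of_finrank_eq
    ((Submodule.finrank_le _).antisymm (by rwa [Subalgebra.finrank_toSubmodule]))

theorem Pi.injective_sigma_algHom_comp_evalAlgHom {R L ι : Type*} [DecidableEq ι]
    {B : ι → Type*} [CommSemiring R] [∀ i, Semiring (B i)] [∀ i, Algebra R (B i)]
    [Semiring L] [Nontrivial L] [Algebra R L] :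
    Function.Injective fun p : Σ i, B i →ₐ[R] L ↦ p.2.comp (Pi.evalAlgHom R B p.1) := by
  rintro ⟨i, φ⟩ ⟨j, ψ⟩ h
  obtain rfl : i = j := by
    by_contra hij
    simpa [Pi.single_eq_of_ne' hij] using AlgHom.congr_fun h (Pi.single i 1)
  obtain rfl : φ = ψ := AlgHom.ext fun x ↦ by simpa using AlgHom.congr_fun h (Pi.single i x)
  rfl

theorem Algebra.FormallyEtale.natCard_algHom_eq_finrank (K A F : Type*) [Field K] [CommRing A]
    [Algebra K A] [FiniteDimensional K A] [Algebra.FormallyEtale K A] [Field F] [IsAlgClosed F]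
    [Algebra K F] :
    Nat.card (A →ₐ[K] F) = finrank K A := by
  classical
  obtain ⟨I, _, B, _, _, e, _⟩ := (Algebra.FormallyEtale.iff_exists_algEquiv_prod K A).mp ‹_›
  have := Fintype.ofFinite I
  have (i : I) : FiniteDimensional K (B i) :=
    .of_surjective ((Pi.evalAlgHom K B i).comp e.toAlgHom).toLinearMap
      ((Function.surjective_eval i).comp e.surjective)
  refine (card_algHom_le_finrank K A F).antisymm ?_
  calc finrank K A
      = ∑ i, finrank K (B i) := e.toLinearEquiv.finrank_eq.trans (finrank_pi_fintype K)
    _ = ∑ i, Nat.card (B i →ₐ[K] F) := by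
      simp only [AlgHom.natCard_of_splits K _ F fun _ ↦ IsAlgClosed.splits _]
    _ = Nat.card (Σ i, B i →ₐ[K] F) := Nat.card_sigma.symm
    _ ≤ Nat.card ((Π i, B i) →ₐ[K] F) :=
      Nat.card_le_card_of_injective _ Pi.injective_sigma_algHom_comp_evalAlgHom
    _ = Nat.card (A →ₐ[K] F) := Nat.card_congr (e.arrowCongr AlgEquiv.refl).symm

/-- Over an infinite field `K`, every finite-dimensional commutative étale
(i.e. formally étale) `K`-algebra is monogenic: it is generated by a single element
as a `K`-algebra. -/
theorem stmt_5 (K A : Type u) [Field K] [Infinite K]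
    [CommRing A] [Algebra K A] [FiniteDimensional K A]
    [Algebra.FormallyEtale K A] :
    ∃ t : A, Algebra.adjoin K {t} = ⊤ := by
  obtain ⟨t, ht⟩ := exists_injective_algHom_apply (K := K) (A := A) (L := AlgebraicClosure K)
  exact ⟨t, Algebra.adjoin_singleton_eq_top_of_injective_algHom_apply ht
    (Algebra.FormallyEtale.natCard_algHom_eq_finrank K A _).ge⟩
end

section
/- Let K be a field, n ≥ 1 an integer, and K' = K(X_0, …, X_{n−1}) the field of fractions of the polynomial ring in n indeterminates over K. Then the generic monic polynomial p = T^n + X_{n−1}T^{n−1} + … + X_1 T + X_0 ∈ K'[T] is separable, and its Galois group Gal(p) (the Galois group of its splitting field over K') has cardinality n!, i.e., it is the full symmetric group on the n roots. -/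
/-!
Let `A = K[X_0, …, X_{n-1}]` and let `vieta : A → A` send `X_i` to the elementary symmetric
polynomial `e_{n-i}`. By the fundamental theorem of symmetric polynomials `vieta` is injective,
so it extends to an embedding `K' = Frac A ↪ L = Frac A`, and under it `p` becomes
`∏ i, (T + X_i)`. Hence `p` is separable and `L = K'(-X_0, …, -X_{n-1})` is a splitting field
of `p`. Every permutation of the variables fixes the symmetric image of `K'`, giving `n!`
distinct elements of `Gal(L/K') ≅ Gal(p)`, while `Gal(p)` acts faithfully on the `≤ n` roots.
-/

open Polynomial

theorem Polynomial.Gal.card_le_factorial {F : Type*} [Field F] (p : F[X]) :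
    Nat.card p.Gal ≤ p.natDegree.factorial := by
  have : Fact ((p.map (algebraMap F p.SplittingField)).Splits) := ⟨SplittingField.splits p⟩
  calc Nat.card p.Gal ≤ Nat.card (Equiv.Perm (p.rootSet p.SplittingField)) :=
        Nat.card_le_card_of_injective _ (Gal.galActionHom_injective p p.SplittingField)
    _ = (p.rootSet p.SplittingField).ncard.factorial := by
        rw [Nat.card_perm, Nat.card_coe_set_eq]
    _ ≤ p.natDegree.factorial := Nat.factorial_le (p.ncard_rootSet_le _)

namespace MvPolynomial

variable (R : Type*) [CommRing R] (n : ℕ)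

noncomputable def vieta : MvPolynomial (Fin n) R →ₐ[R] MvPolynomial (Fin n) R :=
  (symmetricSubalgebra (Fin n) R).val.comp ((esymmAlgHom (Fin n) R n).comp (rename Fin.rev))

variable {R n}

lemma vieta_X (i : Fin n) : vieta R n (X i) = esymm (Fin n) R (n - i) := by
  simp only [vieta, AlgHom.comp_apply, rename_X, Subalgebra.coe_val, esymmAlgHom_apply, aeval_X,
    Fin.val_rev]
  congr 1
  omega

lemma isSymmetric_vieta (a : MvPolynomial (Fin n) R) : (vieta R n a).IsSymmetric :=
  (esymmAlgHom (Fin n) R n (rename Fin.rev a)).2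

lemma vieta_injective : Function.Injective (vieta R n) :=
  Subtype.val_injective.comp <| (esymmAlgHom_injective R (Fintype.card_fin n).ge).comp <|
    rename_injective _ Fin.rev_injective

lemma map_vieta_freeMonic :
    (freeMonic R n).map (vieta R n : MvPolynomial (Fin n) R →+* MvPolynomial (Fin n) R) =
      ∏ i : Fin n, (Polynomial.X + Polynomial.C (X i)) := by
  nontriviality R
  set q : (MvPolynomial (Fin n) R)[X] := ∏ i : Fin n, (Polynomial.X + Polynomial.C (X i))
  have hq : q.Monic := monic_prod_of_monic _ _ fun i _ => monic_X_add_C _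
  have hdeg : q.natDegree = n := by
    simp [q, natDegree_prod_of_monic _ _ fun i _ => monic_X_add_C _]
  refine Polynomial.ext fun k => ?_
  rw [Polynomial.coeff_map, coeff_freeMonic]
  rcases lt_trichotomy k n with hk | rfl | hk
  · rw [dif_pos hk, AlgHom.coe_toRingHom, vieta_X,
      prod_X_add_C_coeff _ _ _ (by simpa using hk.le), Fintype.card_fin]
  · rw [dif_neg (lt_irrefl k), if_pos rfl, map_one, ← hq.coeff_natDegree, hdeg]
  · rw [dif_neg (by omega), if_neg hk.ne', map_zero, coeff_eq_zero_of_natDegree_lt (by omega)]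

end MvPolynomial

namespace Polynomial

open MvPolynomial (vieta map_vieta_freeMonic)

variable {R : Type*} [CommRing R] {n : ℕ} {F L : Type*} [Field F] [Field L]
  [Algebra (MvPolynomial (Fin n) R) F] [Algebra (MvPolynomial (Fin n) R) L] [Algebra F L]

local notation "A" => MvPolynomial (Fin n) R

variable (hFL : ∀ a : MvPolynomial (Fin n) R,
  algebraMap F L (algebraMap _ F a) = algebraMap _ L (vieta R n a))
include hFL

lemma map_map_freeMonic_eq_prod :
    ((freeMonic R n).map (algebraMap A F)).map (algebraMap F L) =
      ∏ i : Fin n, (X + C (algebraMap A L (MvPolynomial.X i))) := by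
  have : (algebraMap F L).comp (algebraMap A F) = (algebraMap A L).comp (vieta R n : A →+* A) :=
    RingHom.ext hFL
  rw [Polynomial.map_map, this, ← Polynomial.map_map, map_vieta_freeMonic, Polynomial.map_prod]
  simp only [Polynomial.map_add, Polynomial.map_X, Polynomial.map_C]

variable [IsFractionRing (MvPolynomial (Fin n) R) L]

lemma separable_map_freeMonic [Nontrivial R] :
    ((freeMonic R n).map (algebraMap A F)).Separable := by
  rw [← separable_map (algebraMap F L), map_map_freeMonic_eq_prod hFL]
  simp_rw [← sub_neg_eq_add, ← C_neg]
  refine separable_prod_X_sub_C_iff.mpr fun i j hij => ?_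
  exact MvPolynomial.X_injective (IsFractionRing.injective A L (neg_injective hij))

lemma isSplittingField_map_freeMonic :
    IsSplittingField F L ((freeMonic R n).map (algebraMap A F)) := by
  set p := (freeMonic R n).map (algebraMap A F)
  have hsplits : (p.map (algebraMap F L)).Splits := by
    rw [map_map_freeMonic_eq_prod hFL]
    exact Splits.prod fun i _ => Splits.X_add_C _
  have hroot (i : Fin n) : -algebraMap A L (MvPolynomial.X i) ∈ p.rootSet L := by
    rw [mem_rootSet', aeval_def, eval₂_eq_eval_map, map_map_freeMonic_eq_prod hFL, eval_prod]
    exact ⟨(monic_prod_of_monic _ _ fun i _ => monic_X_add_C _).ne_zero,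
      Finset.prod_eq_zero (Finset.mem_univ i) (by simp)⟩
  refine isSplittingField_iff_intermediateField.mpr ⟨hsplits, eq_top_iff.mpr ?_⟩
  set E := IntermediateField.adjoin F (p.rootSet L)
  suffices h : Subfield.closure (Set.range (algebraMap A L)) ≤ E.toSubfield by
    rw [IsFractionRing.closure_range_algebraMap] at h
    exact fun x _ => h trivial
  rw [Subfield.closure_le]
  rintro _ ⟨a, rfl⟩
  induction a using MvPolynomial.induction_on with
  | C c =>
    have : algebraMap A L (MvPolynomial.C c) =
        algebraMap F L (algebraMap A F (MvPolynomial.C c)) := by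
      rw [hFL, ← MvPolynomial.algebraMap_eq, AlgHom.commutes]
    exact this ▸ E.algebraMap_mem _
  | add a b ha hb => rw [map_add]; exact add_mem ha hb
  | mul_X a i ha =>
    rw [map_mul, ← neg_neg (algebraMap A L (MvPolynomial.X i))]
    exact mul_mem ha (neg_mem (IntermediateField.subset_adjoin _ _ (hroot i)))

variable [IsFractionRing (MvPolynomial (Fin n) R) F]

noncomputable def permRoots (σ : Equiv.Perm (Fin n)) : L ≃ₐ[F] L :=
  let e : L ≃+* L :=
    IsFractionRing.ringEquivOfRingEquiv (MvPolynomial.renameEquiv R σ : A ≃+* A)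
  have he : (e : L →+* L).comp (algebraMap F L) = algebraMap F L :=
    IsLocalization.ringHom_ext (nonZeroDivisors A) <| RingHom.ext fun a => by
      simp [e, hFL, MvPolynomial.isSymmetric_vieta a σ]
  AlgEquiv.ofRingEquiv (f := e) fun y => RingHom.congr_fun he y

lemma permRoots_algebraMap (σ : Equiv.Perm (Fin n)) (a : A) :
    permRoots hFL σ (algebraMap A L a) = algebraMap A L (MvPolynomial.rename σ a) :=
  IsFractionRing.ringEquivOfRingEquiv_algebraMap _ a

lemma permRoots_injective [Nontrivial R] : Function.Injective (permRoots hFL) := by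
  intro σ τ h
  ext i
  have := DFunLike.congr_fun h (algebraMap A L (MvPolynomial.X i))
  rw [permRoots_algebraMap, permRoots_algebraMap, MvPolynomial.rename_X,
    MvPolynomial.rename_X] at this
  rw [MvPolynomial.X_injective (IsFractionRing.injective A L this)]

lemma card_gal_map_freeMonic [Nontrivial R] :
    Nat.card ((freeMonic R n).map (algebraMap A F)).Gal = n.factorial := by
  set p := (freeMonic R n).map (algebraMap A F)
  have := isSplittingField_map_freeMonic hFL
  let e := (IsSplittingField.algEquiv L p).autCongr
  have hdeg : p.natDegree = n := by
    rw [(monic_freeMonic R n).natDegree_map, natDegree_freeMonic]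
  refine le_antisymm (hdeg ▸ Gal.card_le_factorial p) ?_
  calc n.factorial = Nat.card (Equiv.Perm (Fin n)) := by rw [Nat.card_perm, Nat.card_fin]
    _ ≤ Nat.card p.Gal :=
      Nat.card_le_card_of_injective _ (e.injective.comp (permRoots_injective hFL))

end Polynomial

namespace MvPolynomial

variable (R : Type*) [CommRing R] [IsDomain R] (n : ℕ)

/-- A second copy of `Frac R[X_0, …, X_{n-1}]`, made into an extension of the first through
`vieta`. -/
def VietaExtension : Type _ := FractionRing (MvPolynomial (Fin n) R)

noncomputable instance : Field (VietaExtension R n) :=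
  inferInstanceAs (Field (FractionRing _))

noncomputable instance : Algebra (MvPolynomial (Fin n) R) (VietaExtension R n) :=
  inferInstanceAs (Algebra _ (FractionRing _))

instance : IsFractionRing (MvPolynomial (Fin n) R) (VietaExtension R n) :=
  inferInstanceAs (IsFractionRing _ (FractionRing _))

noncomputable instance : Algebra (FractionRing (MvPolynomial (Fin n) R)) (VietaExtension R n) :=
  (IsFractionRing.lift (g := (algebraMap _ (VietaExtension R n)).comp (vieta R n).toRingHom)
    ((IsFractionRing.injective _ _).comp vieta_injective)).toAlgebra

variable {R n}

lemma algebraMap_fractionRing_vietaExtension (a : MvPolynomial (Fin n) R) :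
    algebraMap (FractionRing (MvPolynomial (Fin n) R)) (VietaExtension R n)
      (algebraMap _ _ a) = algebraMap _ (VietaExtension R n) (vieta R n a) :=
  IsFractionRing.lift_algebraMap _ a

end MvPolynomial

theorem stmt_8_general (K : Type*) [Field K] (n : ℕ) :
    let K' := FractionRing (MvPolynomial (Fin n) K)
    let p : Polynomial K' := Polynomial.X ^ n +
      ∑ i : Fin n, Polynomial.C
        (algebraMap (MvPolynomial (Fin n) K) K' (MvPolynomial.X i)) *
          Polynomial.X ^ (i : ℕ)
    p.Separable ∧ Nat.card p.Gal = Nat.factorial n := by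
  intro K' p
  have hp : p = (freeMonic K n).map (algebraMap (MvPolynomial (Fin n) K) K') := by
    simp [p, freeMonic, Polynomial.map_sum]
  have hFL := MvPolynomial.algebraMap_fractionRing_vietaExtension (R := K) (n := n)
  rw [hp]
  exact ⟨separable_map_freeMonic hFL, card_gal_map_freeMonic hFL⟩

/-- Over `K' = K(X_0, …, X_{n-1})`, the generic monic polynomial
`p = T^n + X_{n-1} T^{n-1} + … + X_1 T + X_0` is separable, and its Galois group
(the Galois group of its splitting field over `K'`) has cardinality `n!`. -/
theorem stmt_8 (K : Type*) [Field K] (n : ℕ) (hn : 1 ≤ n) :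
    let K' := FractionRing (MvPolynomial (Fin n) K)
    let p : Polynomial K' := Polynomial.X ^ n +
      ∑ i : Fin n, Polynomial.C
        (algebraMap (MvPolynomial (Fin n) K) K' (MvPolynomial.X i)) *
          Polynomial.X ^ (i : ℕ)
    p.Separable ∧ Nat.card p.Gal = Nat.factorial n :=
  stmt_8_general K n
end

section
/- Let K be a field and A a finite-dimensional K-algebra. Let X ⊆ A* and Y, U ⊆ A be K-subspaces, and suppose the multiplication map Y ⊗_K U → A, y ⊗ u ↦ y·u, is injective. Then the linear map Θ : Hom_K(X, A*) ⊕ Hom_K(Y, A) → (X ⊗_K Y ⊗_K U)*, sending (f, g) to the functional x ⊗ y ⊗ z ↦ f(x)(y·z) + x(g(y)·z), is surjective. That is, for every ψ ∈ (X ⊗_K Y ⊗_K U)* there exist K-linear maps f : X → A* and g : Y → A with ψ(x ⊗ y ⊗ z) = f(x)(y·z) + x(g(y)·z) for all x ∈ X, y ∈ Y, z ∈ U. -/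
open TensorProduct

/-! The multiplication map `Y ⊗ U → A` is an injective linear map of vector spaces, hence has a
left inverse `p`. Then `f x := ψ (x ⊗ p(-))` and `g := 0` already realise `ψ`. -/

theorem LinearMap.exists_dual_extension_of_injective {K V W X : Type*} [Field K]
    [AddCommGroup V] [Module K V] [AddCommGroup W] [Module K W] [AddCommMonoid X] [Module K X]
    (m : V →ₗ[K] W) (hm : Function.Injective m) (Ψ : X →ₗ[K] V →ₗ[K] K) :
    ∃ f : X →ₗ[K] W →ₗ[K] K, ∀ x v, f x (m v) = Ψ x v := by
  obtain ⟨p, hp⟩ := m.exists_leftInverse_of_injective (LinearMap.ker_eq_bot.mpr hm)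
  refine ⟨LinearMap.lcomp K K p ∘ₗ Ψ, fun x v => ?_⟩
  simp [← LinearMap.comp_apply p m, hp]

theorem stmt_9_general (K : Type*) [Field K] (A : Type*) [Ring A] [Algebra K A]
    (X : Submodule K (Module.Dual K A)) (Y U : Submodule K A)
    (hinj : Function.Injective
      (TensorProduct.lift (((LinearMap.mul K A).comp Y.subtype).compl₂ U.subtype))) :
    ∀ ψ : Module.Dual K ((↥X ⊗[K] ↥Y) ⊗[K] ↥U),
      ∃ (f : ↥X →ₗ[K] Module.Dual K A) (g : ↥Y →ₗ[K] A),
        ∀ (x : ↥X) (y : ↥Y) (z : ↥U),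
          ψ ((x ⊗ₜ[K] y) ⊗ₜ[K] z) =
            f x ((y : A) * (z : A)) + (x : Module.Dual K A) ((g y) * (z : A)) := by
  intro ψ
  let Ψ : X →ₗ[K] Y ⊗[K] U →ₗ[K] K :=
    curry (ψ ∘ₗ (TensorProduct.assoc K X Y U).symm.toLinearMap)
  obtain ⟨f, hf⟩ := LinearMap.exists_dual_extension_of_injective (V := Y ⊗[K] U) _ hinj Ψ
  exact ⟨f, 0, fun x y z => by simpa [Ψ] using (hf x (y ⊗ₜ z)).symm⟩

/-- Let `A` be a finite-dimensional `K`-algebra, `X ⊆ A*`, `Y, U ⊆ A`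
subspaces such that the multiplication map `Y ⊗ U → A` is injective. Then the map
`Θ : Hom(X, A*) ⊕ Hom(Y, A) → (X ⊗ Y ⊗ U)*`, `(f, g) ↦ (x ⊗ y ⊗ z ↦ f(x)(y·z) + x(g(y)·z))`,
is surjective: every `ψ ∈ (X ⊗ Y ⊗ U)*` is of the form above for some `f`, `g`. -/
theorem stmt_9 (K : Type*) [Field K] (A : Type*) [Ring A] [Algebra K A]
    [FiniteDimensional K A]
    (X : Submodule K (Module.Dual K A)) (Y U : Submodule K A)
    (hinj : Function.Injective
      (TensorProduct.lift (((LinearMap.mul K A).comp Y.subtype).compl₂ U.subtype))) :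
    ∀ ψ : Module.Dual K ((↥X ⊗[K] ↥Y) ⊗[K] ↥U),
      ∃ (f : ↥X →ₗ[K] Module.Dual K A) (g : ↥Y →ₗ[K] A),
        ∀ (x : ↥X) (y : ↥Y) (z : ↥U),
          ψ ((x ⊗ₜ[K] y) ⊗ₜ[K] z) =
            f x ((y : A) * (z : A)) + (x : Module.Dual K A) ((g y) * (z : A)) :=
  stmt_9_general K A X Y U hinj
end

section
/- Let K be a field and A a K-algebra with dim_K A = n. Let X ⊆ A* and Y, U ⊆ A be K-subspaces with dim X = r, dim Y = s, dim U = u, and suppose the multiplication map Y ⊗_K U → A, y ⊗ u ↦ y·u, is injective. Then the K-subspace of Hom_K(X, A*) ⊕ Hom_K(Y, A) consisting of all pairs (f, g) such that f(x)(y·z) + x(g(y)·z) = 0 for all x ∈ X, y ∈ Y, z ∈ U has dimension rn + sn − rsu. -/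
/-!
Write `m : Y ⊗ U → A` for the multiplication map. For fixed `x`, the equations on `(f, g)` say
that the functional `y ⊗ z ↦ f(x)(yz) + x(g(y)z)` on `Y ⊗ U` vanishes, so the space in question
is the kernel of a linear map `Hom(X, A*) × Hom(Y, A) → Hom(X, (Y ⊗ U)*)` whose first component
is `f ↦ m* ∘ f`. Since `m` is injective, `m*` is surjective, hence so is the whole map, and
rank–nullity gives `rn + sn - r(su)`.
-/

open TensorProduct

theorem finrank_linearMap_of_field {K V W : Type*} [Field K] [AddCommGroup V] [Module K V]
    [FiniteDimensional K V] [AddCommGroup W] [Module K W] :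
    Module.finrank K (V →ₗ[K] W) = Module.finrank K V * Module.finrank K W :=
  have := Module.Free.of_divisionRing K V
  have := Module.Free.of_divisionRing K W
  Module.finrank_linearMap K K V W

section Incidence

variable {K A : Type*} [Field K] [Ring A] [Algebra K A]
  (X : Submodule K (Module.Dual K A)) (Y U : Submodule K A)

noncomputable def incidenceMapSnd : (Y →ₗ[K] A) →ₗ[K] X →ₗ[K] Y ⊗[K] U →ₗ[K] K where
  toFun g := (lift (((LinearMap.mul K A).comp g).compl₂ U.subtype)).dualMap ∘ₗ X.subtype
  map_add' g g' := by ext; simp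
  map_smul' c g := by ext; simp

noncomputable def incidenceMap :
    (X →ₗ[K] A →ₗ[K] K) × (Y →ₗ[K] A) →ₗ[K] X →ₗ[K] Y ⊗[K] U →ₗ[K] K :=
  (LinearMap.llcomp K X _ _ (Y.mulMap U).dualMap).coprod (incidenceMapSnd X Y U)

theorem incidenceMap_apply (f : X →ₗ[K] A →ₗ[K] K) (g : Y →ₗ[K] A) (x : X) (y : Y) (z : U) :
    incidenceMap X Y U (f, g) x (y ⊗ₜ z) = f x (y * z) + (x : Module.Dual K A) (g y * z) := by
  simp [incidenceMap, incidenceMapSnd]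

theorem mem_ker_incidenceMap {fg : (X →ₗ[K] A →ₗ[K] K) × (Y →ₗ[K] A)} :
    fg ∈ LinearMap.ker (incidenceMap X Y U) ↔
      ∀ (x : X) (y : Y) (z : U), fg.1 x (y * z) + (x : Module.Dual K A) (fg.2 y * z) = 0 := by
  refine LinearMap.mem_ker.trans ⟨fun h x y z => ?_, fun h => ?_⟩
  · rw [← incidenceMap_apply, h, LinearMap.zero_apply, LinearMap.zero_apply]
  · ext x y z
    simpa [← incidenceMap_apply] using h x y z

theorem incidenceMap_surjective (h : Function.Injective (Y.mulMap U)) :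
    Function.Surjective (incidenceMap X Y U) := by
  rw [← LinearMap.range_eq_top, incidenceMap, LinearMap.range_coprod, eq_top_iff]
  refine le_sup_of_le_left (LinearMap.range_eq_top.2 ?_).ge
  exact (LinearMap.dualMap_surjective_of_injective (V₁ := Y ⊗[K] U) (V₂ := A) h)
    |>.surjective_linearMapComp_left

theorem finrank_ker_incidenceMap [FiniteDimensional K A] (h : Function.Injective (Y.mulMap U)) :
    Module.finrank K (LinearMap.ker (incidenceMap X Y U)) =
      Module.finrank K X * Module.finrank K A + Module.finrank K Y * Module.finrank K A -
        Module.finrank K X * (Module.finrank K Y * Module.finrank K U) := by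
  have finrank_domain : Module.finrank K ((X →ₗ[K] A →ₗ[K] K) × (Y →ₗ[K] A)) =
      Module.finrank K X * Module.finrank K A + Module.finrank K Y * Module.finrank K A := by
    have := Module.Free.of_divisionRing K (X →ₗ[K] A →ₗ[K] K)
    rw [Module.finrank_prod, finrank_linearMap_of_field (V := X), finrank_linearMap_of_field,
      Module.finrank_self, mul_one, finrank_linearMap_of_field]
  have finrank_codomain : Module.finrank K (X →ₗ[K] Y ⊗[K] U →ₗ[K] K) =
      Module.finrank K X * (Module.finrank K Y * Module.finrank K U) := by
    rw [finrank_linearMap_of_field (V := X), finrank_linearMap_of_field (V := Y ⊗[K] U),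
      Module.finrank_self, mul_one, Module.finrank_tensorProduct]
  have rank_nullity := LinearMap.finrank_range_add_finrank_ker
    (V := (X →ₗ[K] A →ₗ[K] K) × (Y →ₗ[K] A)) (V₂ := X →ₗ[K] Y ⊗[K] U →ₗ[K] K)
    (incidenceMap X Y U)
  rw [LinearMap.range_eq_top.2 (incidenceMap_surjective X Y U h), finrank_top,
    finrank_domain, finrank_codomain] at rank_nullity
  omega

end Incidence

/-- Let `A` be a `K`-algebra of dimension `n`, `X ⊆ A*`, `Y, U ⊆ A`
subspaces of dimensions `r`, `s`, `u`, with the multiplication map `Y ⊗ U → A` injective.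
The subspace of `Hom(X, A*) ⊕ Hom(Y, A)` consisting of the pairs `(f, g)` with
`f(x)(y·z) + x(g(y)·z) = 0` for all `x ∈ X`, `y ∈ Y`, `z ∈ U` has dimension
`rn + sn - rsu`. It is expressed below as the intersection of the kernels of the
functionals `(f, g) ↦ f(x)(y·z) + x(g(y)·z)`; here `A* = A →ₗ[K] K` is the dual. -/
theorem stmt_10 (K : Type*) [Field K] (A : Type*) [Ring A] [Algebra K A]
    [FiniteDimensional K A] (n r s u : ℕ) (hn : Module.finrank K A = n)
    (X : Submodule K (Module.Dual K A)) (Y U : Submodule K A)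
    (hX : Module.finrank K ↥X = r) (hY : Module.finrank K ↥Y = s)
    (hU : Module.finrank K ↥U = u)
    (hinj : Function.Injective
      (TensorProduct.lift (((LinearMap.mul K A).comp Y.subtype).compl₂ U.subtype))) :
    Module.finrank K
      ↥(⨅ (x : ↥X) (y : ↥Y) (z : ↥U), LinearMap.ker
        ((LinearMap.applyₗ ((y : A) * (z : A))) ∘ₗ (LinearMap.applyₗ x) ∘ₗ
            (LinearMap.fst K (↥X →ₗ[K] (A →ₗ[K] K)) (↥Y →ₗ[K] A)) +
          ((x : Module.Dual K A) ∘ₗ LinearMap.mulRight K (z : A)) ∘ₗ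
            (LinearMap.applyₗ y) ∘ₗ
            (LinearMap.snd K (↥X →ₗ[K] (A →ₗ[K] K)) (↥Y →ₗ[K] A)))) =
      r * n + s * n - r * s * u := by
  subst hn hX hY hU
  rw [mul_assoc]
  convert finrank_ker_incidenceMap X Y U hinj using 2
  refine congrArg (fun W : Submodule K _ => Module.finrank K W) (Submodule.ext fun fg => ?_)
  rw [mem_ker_incidenceMap]
  simp
end
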